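/- Let ϖ : ℝ → ℂ be a function such that ϖ⁻(η) := 1_{η≤0}·ϖ(η) is a Schwartz function. Then there is a constant C = C(ϖ) such that for all integers k ≤ 0 and all t ≥ 1: ∫_ℝ | ∫_{−∞}^{0} e^{iyη} (e^{−2itη}−1)/(iη) · ϖ(η/2^k) dη | dy ≤ C 2^{−k/2} t^{1/2}. -/

import Mathlib

noncomputable section

open MeasureTheory Filter Set
open scoped Classical

namespace HWS

/-- 1D Fourier transform, convention `f̂(ξ) = (2π)⁻¹ ∫ e^{-iξx} f(x) dx`. -/
def FT1 (f : ℝ → ℂ) (ξ : ℝ) : ℂ :=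
  (2 * Real.pi : ℂ)⁻¹ * ∫ x : ℝ, Complex.exp (-(Complex.I * ξ * x)) * f x

/-- Partial Fourier transform in the first variable. -/
def FTx (F : ℝ × ℝ → ℂ) (ξ y : ℝ) : ℂ :=
  (2 * Real.pi : ℂ)⁻¹ * ∫ x : ℝ, Complex.exp (-(Complex.I * ξ * x)) * F (x, y)

/-- Partial Fourier transform in the second variable. -/
def FTy (F : ℝ × ℝ → ℂ) (x η : ℝ) : ℂ :=
  (2 * Real.pi : ℂ)⁻¹ * ∫ y : ℝ, Complex.exp (-(Complex.I * η * y)) * F (x, y)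

/-- Full Fourier transform on `ℝ²`. -/
def FT2 (F : ℝ × ℝ → ℂ) (ξ η : ℝ) : ℂ :=
  (2 * Real.pi : ℂ)⁻¹ * ∫ y : ℝ, Complex.exp (-(Complex.I * η * y)) * FTx F ξ y

/-- Inverse Fourier transform on `ℝ²` (consistent with the `(2π)⁻¹` forward convention). -/
def IFT2 (m : ℝ × ℝ → ℂ) (w : ℝ × ℝ) : ℂ :=
  ∫ q : ℝ × ℝ, Complex.exp (Complex.I * (w.1 * q.1 + w.2 * q.2)) * m q

def L1norm (f : ℝ → ℂ) : ℝ := ∫ x : ℝ, norm (f x)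

def L2norm (f : ℝ → ℂ) : ℝ := (∫ x : ℝ, norm (f x) ^ 2) ^ ((1:ℝ)/2)

def L2norm2 (F : ℝ × ℝ → ℂ) : ℝ := (∫ p : ℝ × ℝ, norm (F p) ^ 2) ^ ((1:ℝ)/2)

/-- `ϕ(x) = φ(x) − φ(2x)`. -/
def lpb (φ : ℝ → ℝ) (x : ℝ) : ℝ := φ x - φ (2 * x)

/-- Littlewood–Paley piece `Δ_{2^k} f`. -/
def LP (φ : ℝ → ℝ) (k : ℤ) (f : ℝ → ℂ) (y : ℝ) : ℂ :=
  ∫ η : ℝ, Complex.exp (Complex.I * y * η) * (lpb φ (η / (2:ℝ) ^ k) : ℂ) * FT1 f η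

/-- Homogeneous Besov norm `Ḃ¹₁₁`. -/
def BesovNorm (φ : ℝ → ℝ) (f : ℝ → ℂ) : ℝ :=
  ∑' k : ℤ, (2:ℝ) ^ k * L1norm (LP φ k f)

/-- `𝓖 = L² ∩ Ḃ¹₁₁` norm. -/
def Gnorm (φ : ℝ → ℝ) (f : ℝ → ℂ) : ℝ := L2norm f + BesovNorm φ f

/-- `Z` norm: `sup_ξ ‖𝓕ₓF(ξ,·)‖_𝓖`. -/
def Znorm (φ : ℝ → ℝ) (F : ℝ × ℝ → ℂ) : ℝ :=
  ⨆ ξ : ℝ, Gnorm φ (fun y => FTx F ξ y)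

/-- Sobolev `H^N(ℝ²)` norm (Fourier-side definition). -/
def HNnorm (N : ℕ) (F : ℝ × ℝ → ℂ) : ℝ :=
  (∫ q : ℝ × ℝ, (1 + q.1 ^ 2 + q.2 ^ 2) ^ N * norm (FT2 F q.1 q.2) ^ 2) ^ ((1:ℝ)/2)

/-- Mixed norm `L²ₓ H^s_y` (Fourier-side definition in `y`). -/
def L2Hy (s : ℝ) (F : ℝ × ℝ → ℂ) : ℝ :=
  (∫ p : ℝ × ℝ, (1 + p.2 ^ 2) ^ s * norm (FTy F p.1 p.2) ^ 2) ^ ((1:ℝ)/2)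

def xmul (F : ℝ × ℝ → ℂ) : ℝ × ℝ → ℂ := fun p => (p.1 : ℂ) * F p

def x2mul (F : ℝ × ℝ → ℂ) : ℝ × ℝ → ℂ := fun p => (p.1 : ℂ) ^ 2 * F p

def xmul1 (f : ℝ → ℂ) : ℝ → ℂ := fun x => (x : ℂ) * f x

/-- Fourier multiplier `1 + |Dₓ|`. -/
def oneDx (F : ℝ × ℝ → ℂ) : ℝ × ℝ → ℂ := fun p =>
  ∫ ξ : ℝ, Complex.exp (Complex.I * ξ * p.1) * ((1 + |ξ| : ℝ) : ℂ) * FTx F ξ p.2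

/-- `S` norm. -/
def Snorm (N : ℕ) (F : ℝ × ℝ → ℂ) : ℝ := HNnorm N F + L2Hy 2 (xmul F)

/-- `S'` norm. -/
def S'norm (N : ℕ) (F : ℝ × ℝ → ℂ) : ℝ := HNnorm N F + L2norm2 (xmul F)

/-- `𝒴` norm. -/
def Ynorm (φ : ℝ → ℝ) (N : ℕ) (F : ℝ × ℝ → ℂ) : ℝ := Snorm N F + Znorm φ F

/-- `S⁺` norm. -/
def Spnorm (N : ℕ) (F : ℝ × ℝ → ℂ) : ℝ :=
  Snorm N F + L2Hy 3 (xmul F) + Snorm N (oneDx F) + Snorm N (xmul F)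

/-- `𝒴⁺` norm. -/
def Ypnorm (φ : ℝ → ℝ) (N : ℕ) (F : ℝ × ℝ → ℂ) : ℝ :=
  Spnorm N F + Znorm φ F + Znorm φ (oneDx F) + Znorm φ (xmul F) + Znorm φ (x2mul F)

/-- The propagator `e^{it𝒜}`, `𝒜 = ∂ₓ² − |D_y|`. -/
def eA (t : ℝ) (F : ℝ × ℝ → ℂ) : ℝ × ℝ → ℂ := fun p =>
  ∫ q : ℝ × ℝ, Complex.exp (Complex.I * (q.1 * p.1 + q.2 * p.2)) *
    Complex.exp (-(Complex.I * (t : ℂ) * ((q.1 ^ 2 + |q.2| : ℝ) : ℂ))) * FT2 F q.1 q.2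

/-- The trilinear nonlinearity `N^t[F,G,H] = e^{-it𝒜}(e^{it𝒜}F · conj(e^{it𝒜}G) · e^{it𝒜}H)`. -/
def Ntl (t : ℝ) (F G H : ℝ × ℝ → ℂ) : ℝ × ℝ → ℂ :=
  eA (-t) (fun p => eA t F p * (starRingEnd ℂ) (eA t G p) * eA t H p)

/-- The 1D Schrödinger group `e^{it∂ₓ²}`. -/
def U1 (t : ℝ) (f : ℝ → ℂ) : ℝ → ℂ := fun x =>
  ∫ ξ : ℝ, Complex.exp (Complex.I * ξ * x) *
    Complex.exp (-(Complex.I * (t : ℂ) * (ξ : ℂ) ^ 2)) * FT1 f ξ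

/-- `I^t[f,g,h] = U(−t)(U(t)f · conj(U(t)g) · U(t)h)`. -/
def It (t : ℝ) (f g h : ℝ → ℂ) : ℝ → ℂ :=
  U1 (-t) (fun x => U1 t f x * (starRingEnd ℂ) (U1 t g x) * U1 t h x)

/-- The resonance function `ω(η,η₁,η₂)`. -/
def om (η η₁ η₂ : ℝ) : ℝ := |η| - |η - η₁| + |η₂ - η₁| - |η₂|

/-- Fourier side of the resonant trilinear operator `R`. -/
def FTR (F G H : ℝ × ℝ → ℂ) (ξ η : ℝ) : ℂ :=
  ∫ e in {e : ℝ × ℝ | om η e.1 e.2 = 0},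
    FT2 F ξ (η - e.1) * (starRingEnd ℂ) (FT2 G ξ (e.2 - e.1)) * FT2 H ξ e.2

/-- The resonant trilinear operator `R`. -/
def Rres (F G H : ℝ × ℝ → ℂ) : ℝ × ℝ → ℂ := fun p =>
  ∫ q : ℝ × ℝ, Complex.exp (Complex.I * (q.1 * p.1 + q.2 * p.2)) * FTR F G H q.1 q.2

/-- The `y`-frequency slice `F_η(x) = 𝓕_y F(x,η)`. -/
def slice (F : ℝ × ℝ → ℂ) (η : ℝ) : ℝ → ℂ := fun x => FTy F x η

/-- Fourier side of the resonant part `N₀^t`. -/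
def FTN0 (t : ℝ) (F G H : ℝ × ℝ → ℂ) (ξ η : ℝ) : ℂ :=
  ∫ e in {e : ℝ × ℝ | om η e.1 e.2 = 0},
    FT1 (It t (slice F (η - e.1)) (slice G (e.2 - e.1)) (slice H e.2)) ξ

/-- The resonant part `N₀^t` of the nonlinearity. -/
def N0 (t : ℝ) (F G H : ℝ × ℝ → ℂ) : ℝ × ℝ → ℂ := fun p =>
  ∫ q : ℝ × ℝ, Complex.exp (Complex.I * (q.1 * p.1 + q.2 * p.2)) * FTN0 t F G H q.1 q.2

/-- `Ñ^t = N^t − N₀^t`. -/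
def Ntilde (t : ℝ) (F G H : ℝ × ℝ → ℂ) : ℝ × ℝ → ℂ := fun p =>
  Ntl t F G H p - N0 t F G H p

/-- Littlewood–Paley projection `Q_A` in `x` on functions of two variables. -/
def Qx (φ : ℝ → ℝ) (A : ℝ) (F : ℝ × ℝ → ℂ) : ℝ × ℝ → ℂ := fun p =>
  if A = 1 then ∫ ξ : ℝ, Complex.exp (Complex.I * ξ * p.1) * (φ ξ : ℂ) * FTx F ξ p.2
  else ∫ ξ : ℝ, Complex.exp (Complex.I * ξ * p.1) * (lpb φ (ξ / A) : ℂ) * FTx F ξ p.2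

/-- Littlewood–Paley projection `Q_A` on functions of one variable. -/
def Qx1 (φ : ℝ → ℝ) (A : ℝ) (f : ℝ → ℂ) : ℝ → ℂ := fun x =>
  if A = 1 then ∫ ξ : ℝ, Complex.exp (Complex.I * ξ * x) * (φ ξ : ℂ) * FT1 f ξ
  else ∫ ξ : ℝ, Complex.exp (Complex.I * ξ * x) * (lpb φ (ξ / A) : ℂ) * FT1 f ξ

/-- Projection `Q_{≤A}` (multiplier `φ(ξ/A)` in `x`). -/
def Qle (φ : ℝ → ℝ) (A : ℝ) (F : ℝ × ℝ → ℂ) : ℝ × ℝ → ℂ := fun p =>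
  ∫ ξ : ℝ, Complex.exp (Complex.I * ξ * p.1) * (φ (ξ / A) : ℂ) * FTx F ξ p.2

/-- Szegő projector onto nonnegative frequencies, one variable. -/
def piPlus1 (f : ℝ → ℂ) : ℝ → ℂ := fun y =>
  ∫ η in Set.Ici (0:ℝ), Complex.exp (Complex.I * η * y) * FT1 f η

def piMinus1 (f : ℝ → ℂ) : ℝ → ℂ := fun y => f y - piPlus1 f y

/-- Szegő projector `Π₊` in the `y` variable. -/
def PiPlus (F : ℝ × ℝ → ℂ) : ℝ × ℝ → ℂ := fun p =>
  ∫ η in Set.Ici (0:ℝ), Complex.exp (Complex.I * η * p.2) * FTy F p.1 η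

/-- `Π₋ = Id − Π₊`. -/
def PiMinus (F : ℝ × ℝ → ℂ) : ℝ × ℝ → ℂ := fun p => F p - PiPlus F p

/-- Space-time norm `X_T`. -/
def XTnorm (φ : ℝ → ℝ) (N : ℕ) (δ T : ℝ) (F : ℝ → ℝ × ℝ → ℂ) : ℝ :=
  ⨆ t : Set.Icc (0:ℝ) T,
    (Znorm φ (F (t:ℝ)) + (1 + |(t:ℝ)|) ^ (-δ) * Ynorm φ N (F (t:ℝ))
      + (1 + |(t:ℝ)|) ^ (1 - 3*δ) * Ynorm φ N (fun p => deriv (fun s => F s p) (t:ℝ)))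

/-- Space-time norm `X_T⁺`. -/
def XTpnorm (φ : ℝ → ℝ) (N : ℕ) (δ T : ℝ) (F : ℝ → ℝ × ℝ → ℂ) : ℝ :=
  XTnorm φ N δ T F + ⨆ t : Set.Icc (0:ℝ) T, (1 + |(t:ℝ)|) ^ (-δ) * Ypnorm φ N (F (t:ℝ))

/-- A smooth cutoff equal to `1` on `[−1,1]` and vanishing outside `(−2,2)`. -/
def IsCutoff (φ : ℝ → ℝ) : Prop :=
  ContDiff ℝ (⊤ : ℕ∞) φ ∧ HasCompactSupport φ ∧ (∀ x, |x| ≤ 1 → φ x = 1) ∧ (∀ x, 2 ≤ |x| → φ x = 0)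

/-- `U` solves the half wave Schrödinger equation at time `t`, in the profile
formulation: `F(t) := e^{−it𝒜}U(t)` satisfies `i∂ₜF(t) = N^t[F(t),F(t),F(t)]`. -/
def SolvesHWS (U : ℝ → ℝ × ℝ → ℂ) (t : ℝ) : Prop :=
  ∀ p, HasDerivAt (fun s => eA (-s) (U s) p)
    (-Complex.I * Ntl t (eA (-t) (U t)) (eA (-t) (U t)) (eA (-t) (U t)) p) t

/-- `G` solves the resonant system `i∂ₜG = R[G,G,G]` at time `t`. -/
def SolvesRes (G : ℝ → ℝ × ℝ → ℂ) (t : ℝ) : Prop :=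
  ∀ p, HasDerivAt (fun s => G s p) (-Complex.I * Rres (G t) (G t) (G t) p) t

/-- Continuity from `[0,∞)` into `𝒴` (in the metric induced by the `𝒴` norm). -/
def YContinuousOn (φ : ℝ → ℝ) (N : ℕ) (F : ℝ → ℝ × ℝ → ℂ) : Prop :=
  ∀ t₀ ∈ Set.Ici (0:ℝ),
    Filter.Tendsto (fun t => Ynorm φ N (fun p => F t p - F t₀ p))
      (nhdsWithin t₀ (Set.Ici 0)) (nhds 0)

end HWS

open HWS

section AuxHWSLemma

open MeasureTheory Complex Real Set FourierTransform SchwartzMap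

private theorem hws_norm_exp_I_mul (a b : ℝ) : ‖Complex.exp (Complex.I * a * b)‖ = 1 := by
  rw [show (Complex.I * (a:ℂ) * (b:ℂ)) = ((a*b : ℝ):ℂ) * Complex.I by push_cast; ring,
    Complex.norm_exp_ofReal_mul_I]

private theorem hws_K_eval (t η : ℝ) (hη : η ≠ 0) :
    ∫ s in (-(2*t))..0, Complex.exp (Complex.I * η * s)
      = (1 - Complex.exp (-(2 * Complex.I * t * η))) / (Complex.I * η) := by
  have hc : (Complex.I * η) ≠ 0 := by
    simp [Complex.I_ne_zero, Complex.ofReal_eq_zero, hη]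
  rw [integral_exp_mul_complex hc]
  congr 2
  · norm_num
  · congr 1
    push_cast
    ring

private theorem hws_fubini_step (ψ : SchwartzMap ℝ ℂ) (c t y : ℝ) (hc : 0 < c) :
    ∫ η : ℝ, Complex.exp (Complex.I * y * η)
        * (∫ s in Ioc (-(2*t)) 0, Complex.exp (Complex.I * η * s)) * ψ (η / c)
      = ∫ s in Ioc (-(2*t)) 0, (∫ η : ℝ, Complex.exp (Complex.I * (y+s) * η) * ψ (η / c)) := by
  haveI : IsFiniteMeasure (volume.restrict (Ioc (-(2*t)) 0)) := by
    constructor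
    rw [Measure.restrict_apply_univ]
    exact measure_Ioc_lt_top
  have hmeas : Integrable (fun p : ℝ × ℝ =>
      Complex.exp (Complex.I * (y + p.2) * p.1) * ψ (p.1 / c))
      ((volume : Measure ℝ).prod (volume.restrict (Ioc (-(2*t)) 0))) := by
    apply Integrable.mono' (g := fun p : ℝ × ℝ => ‖(ψ (p.1 / c) : ℂ)‖ * 1)
    · exact ((((integrable_comp_div_iff (⇑ψ) (ne_of_gt hc)).2 ψ.integrable).norm).mul_prod
        (integrable_const 1))
    · apply Continuous.aestronglyMeasurable
      exact (Complex.continuous_exp.comp (by fun_prop)).mul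
        (ψ.continuous.comp (continuous_fst.div_const c))
    · filter_upwards with p
      rw [norm_mul, show Complex.I * ((y:ℂ) + (p.2:ℂ)) * (p.1:ℂ)
          = Complex.I * ((y + p.2 : ℝ):ℂ) * ((p.1:ℝ):ℂ) by push_cast; ring,
        hws_norm_exp_I_mul, mul_one, one_mul]
  calc ∫ η : ℝ, Complex.exp (Complex.I * y * η)
        * (∫ s in Ioc (-(2*t)) 0, Complex.exp (Complex.I * η * s)) * ψ (η / c)
      = ∫ η : ℝ, (∫ s in Ioc (-(2*t)) 0, Complex.exp (Complex.I * (y+s) * η) * ψ (η / c)) := by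
        congr 1
        funext η
        rw [mul_assoc, ← MeasureTheory.integral_mul_const, ← MeasureTheory.integral_const_mul]
        congr 1
        funext s
        rw [← mul_assoc, ← Complex.exp_add]
        congr 2
        push_cast
        ring
  _ = _ := MeasureTheory.integral_integral_swap hmeas

private theorem hws_G_scale (ψ : SchwartzMap ℝ ℂ) (w : ℝ → ℂ)
    (hw : ∀ v : ℝ, w v = ∫ x : ℝ, Complex.exp (Complex.I * v * x) * ψ x)
    (c : ℝ) (hc : 0 < c) (u : ℝ) :
    ∫ η : ℝ, Complex.exp (Complex.I * u * η) * ψ (η / c) = c * w (c * u) := by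
  have key : (fun η : ℝ => Complex.exp (Complex.I * u * η) * ψ (η / c))
      = fun η : ℝ => (fun x : ℝ => Complex.exp (Complex.I * (c*u) * x) * ψ x) (η / c) := by
    funext η
    simp only
    congr 2
    have hcne : (c:ℂ) ≠ 0 := Complex.ofReal_ne_zero.2 (ne_of_gt hc)
    push_cast
    field_simp
  rw [key, MeasureTheory.Measure.integral_comp_div
    (fun x : ℝ => Complex.exp (Complex.I * (c*u) * x) * ψ x) c, abs_of_pos hc, hw (c*u),
    real_smul]
  norm_cast

private theorem hws_Iic_scale (w : ℝ → ℂ) (c : ℝ) (hc : 0 < c) (a : ℝ) :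
    ∫ u in Iic a, (c:ℂ) * w (c * u) = ∫ v in Iic (c * a), w v := by
  rw [← integral_indicator measurableSet_Iic, ← integral_indicator measurableSet_Iic]
  have key : (Iic a).indicator (fun u => (c:ℂ) * w (c * u))
      = fun u => (c:ℂ) * ((Iic (c*a)).indicator w) (c * u) := by
    funext u
    by_cases h : u ≤ a
    · rw [indicator_of_mem (mem_Iic.2 h), indicator_of_mem]
      exact mem_Iic.2 (by nlinarith)
    · rw [indicator_of_notMem (by simpa using h), indicator_of_notMem]
      · simp
      · simp only [mem_Iic, not_le] at *
        nlinarith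
  rw [key, MeasureTheory.integral_const_mul,
    MeasureTheory.Measure.integral_comp_mul_left ((Iic (c*a)).indicator w) c,
    abs_of_pos (inv_pos.2 hc), real_smul]
  push_cast
  rw [← mul_assoc]
  norm_cast
  rw [mul_inv_cancel₀ (ne_of_gt hc)]
  simp

private theorem hws_psi_tail_bound (w : ℝ → ℂ) (hw : Integrable w)
    (hw2 : Integrable (fun v : ℝ => v ^ 2 * ‖w v‖))
    (hw0 : ∫ v : ℝ, w v = 0) (b : ℝ) :
    ‖∫ v in Iic b, w v‖ ≤ ((∫ v : ℝ, ‖w v‖) + ∫ v : ℝ, v ^ 2 * ‖w v‖) / (1 + b ^ 2) := by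
  set W1 := ∫ v : ℝ, ‖w v‖ with hW1
  set W3 := ∫ v : ℝ, v ^ 2 * ‖w v‖ with hW3
  rw [le_div_iff₀ (by positivity : (0:ℝ) < 1 + b ^ 2)]
  have hbound1 : ‖∫ v in Iic b, w v‖ ≤ W1 := by
    refine (norm_integral_le_integral_norm _).trans ?_
    exact setIntegral_le_integral hw.norm (Filter.Eventually.of_forall fun v => norm_nonneg _)
  have hW3nonneg : ∀ s : Set ℝ, (∫ v in s, v ^ 2 * ‖w v‖) ≤ W3 := by
    intro s
    apply setIntegral_le_integral hw2
    filter_upwards with v; positivity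
  have hbound2 : ‖∫ v in Iic b, w v‖ * b ^ 2 ≤ W3 := by
    rcases le_or_gt b 0 with hb | hb
    · calc ‖∫ v in Iic b, w v‖ * b ^ 2 ≤ (∫ v in Iic b, ‖w v‖) * b ^ 2 := by
            apply mul_le_mul_of_nonneg_right (norm_integral_le_integral_norm _) (sq_nonneg b)
      _ = ∫ v in Iic b, ‖w v‖ * b ^ 2 := by rw [← integral_mul_const]
      _ ≤ ∫ v in Iic b, v ^ 2 * ‖w v‖ := by
          apply setIntegral_mono_on (hw.norm.mul_const _).integrableOn
            hw2.integrableOn measurableSet_Iic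
          intro v hv
          simp only [mem_Iic] at hv
          rw [mul_comm]
          apply mul_le_mul_of_nonneg_right _ (norm_nonneg _)
          nlinarith
      _ ≤ W3 := hW3nonneg _
    · have hsplit : (∫ v in Iic b, w v) + (∫ v in Ioi b, w v) = 0 := by
        rw [← compl_Iic, integral_add_compl measurableSet_Iic hw, hw0]
      have heq : ∫ v in Iic b, w v = -∫ v in Ioi b, w v :=
        eq_neg_of_add_eq_zero_left hsplit
      rw [heq, norm_neg]
      calc ‖∫ v in Ioi b, w v‖ * b ^ 2 ≤ (∫ v in Ioi b, ‖w v‖) * b ^ 2 := by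
            apply mul_le_mul_of_nonneg_right (norm_integral_le_integral_norm _) (sq_nonneg b)
      _ = ∫ v in Ioi b, ‖w v‖ * b ^ 2 := by rw [← integral_mul_const]
      _ ≤ ∫ v in Ioi b, v ^ 2 * ‖w v‖ := by
          apply setIntegral_mono_on (hw.norm.mul_const _).integrableOn
            hw2.integrableOn measurableSet_Ioi
          intro v hv
          simp only [mem_Ioi] at hv
          rw [mul_comm]
          apply mul_le_mul_of_nonneg_right _ (norm_nonneg _)
          nlinarith
      _ ≤ W3 := hW3nonneg _
  rw [mul_add, mul_one]
  exact add_le_add hbound1 hbound2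

private theorem hws_boundA (G : ℝ → ℂ) (hG : Integrable G) (hGc : Continuous G)
    (T : ℝ) (hT : 0 ≤ T) :
    ∫ y : ℝ, ‖∫ s in Ioc (-T) 0, G (y + s)‖ ≤ T * ∫ u : ℝ, ‖G u‖ := by
  haveI : IsFiniteMeasure (volume.restrict (Ioc (-T) 0)) := by
    constructor
    rw [Measure.restrict_apply_univ]
    exact measure_Ioc_lt_top
  set μ := volume.restrict (Ioc (-T) 0) with hμ
  have hslice : ∀ s : ℝ, Integrable (fun y : ℝ => ‖G (y + s)‖) := fun s =>
    (hG.norm).comp_add_right s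
  have hconst : ∀ s : ℝ, (∫ y : ℝ, ‖G (y + s)‖) = ∫ u : ℝ, ‖G u‖ := fun s =>
    integral_add_right_eq_self (fun u => ‖G u‖) s
  have hΦ : Integrable (fun q : ℝ × ℝ => ‖G (q.2 + q.1)‖) (μ.prod volume) := by
    rw [integrable_prod_iff]
    · constructor
      · filter_upwards with s
        exact hslice s
      · apply (integrable_const (∫ u : ℝ, ‖G u‖)).congr
        filter_upwards with s
        rw [← hconst s]
        congr 1
        funext y
        rw [norm_norm]
    · exact (hGc.norm.comp (continuous_snd.add continuous_fst)).aestronglyMeasurable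
  have hM : Integrable (fun y : ℝ => ∫ s, ‖G (y + s)‖ ∂μ) := by
    have := hΦ.integral_prod_right
    exact this
  have hMint : (∫ y : ℝ, ∫ s, ‖G (y + s)‖ ∂μ) = T * ∫ u : ℝ, ‖G u‖ := by
    rw [← MeasureTheory.integral_integral_swap (f := fun s y => ‖G (y + s)‖) hΦ]
    have : (fun s : ℝ => ∫ y : ℝ, ‖G (y + s)‖) = fun _ : ℝ => ∫ u : ℝ, ‖G u‖ := by
      funext s; exact hconst s
    rw [MeasureTheory.integral_congr_ae (Filter.EventuallyEq.of_eq this)]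
    rw [integral_const, hμ, measureReal_restrict_apply_univ, Real.volume_real_Ioc, smul_eq_mul]
    congr 1
    rw [show (0 : ℝ) - -T = T by ring, max_eq_left hT]
  rw [← hMint]
  apply integral_mono_of_nonneg
  · filter_upwards with y; exact norm_nonneg _
  · exact hM
  · filter_upwards with y
    exact norm_integral_le_integral_norm _

end AuxHWSLemma

/-- **An `L¹` oscillatory bound** (Lemma 3.81). If `ϖ⁻(η) = 1_{η≤0}ϖ(η)` is a Schwartz
function, then for `k ≤ 0` and `t ≥ 1`:
`‖∫_{−∞}^0 e^{iyη} (e^{−2itη}−1)/(iη) ϖ(η/2^k) dη‖_{L¹_y} ≤ C 2^{−k/2} t^{1/2}`. -/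
theorem low_frequency_L1_bound (ϖ : ℝ → ℂ)
    (hϖ : ∃ ψ : SchwartzMap ℝ ℂ, ∀ η : ℝ, (if η ≤ 0 then ϖ η else 0) = ψ η) :
    ∃ C : ℝ, 0 < C ∧
      ∀ k : ℤ, k ≤ 0 → ∀ t : ℝ, 1 ≤ t →
        (∫ y : ℝ,
            norm (∫ η in Set.Iic (0:ℝ),
              Complex.exp (Complex.I * y * η) *
                ((Complex.exp (-(2 * Complex.I * t * η)) - 1) / (Complex.I * η)) *
                ϖ (η / (2:ℝ) ^ k))) ≤
          C * (2:ℝ) ^ (-(k:ℝ)/2) * t ^ ((1:ℝ)/2) := by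
  classical
  obtain ⟨ψ, hψ⟩ := hϖ
  set χ : SchwartzMap ℝ ℂ := (FourierTransform.fourierCLE ℝ (SchwartzMap ℝ ℂ)).symm ψ with hχdef
  set w : ℝ → ℂ := fun v => χ (v / (2 * Real.pi)) with hwdef
  have hwformula : ∀ v : ℝ, w v = ∫ x : ℝ, Complex.exp (Complex.I * v * x) * ψ x := by
    intro v
    rw [hwdef]
    simp only
    rw [show ((χ : ℝ → ℂ)) (v / (2*Real.pi)) = FourierTransform.fourierInv (⇑ψ : ℝ → ℂ) (v/(2*Real.pi)) by
      rw [hχdef, FourierTransform.fourierCLE_symm_apply, SchwartzMap.fourierInv_coe]]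
    rw [Real.fourierInv_eq']
    congr 1
    ext x
    rw [smul_eq_mul]
    congr 1
    have h1 : (inner ℝ x (v / (2*Real.pi)) : ℝ) = x * (v / (2*Real.pi)) := by simp [RCLike.inner_apply, mul_comm]
    have h2 : ((2:ℝ) * Real.pi * (x * (v / (2*Real.pi)))) = v * x := by
      field_simp
    rw [h1, h2]
    push_cast
    ring
  have h2pi : (2 * Real.pi) ≠ 0 := by positivity
  have hwint : Integrable w := (integrable_comp_div_iff (⇑χ) h2pi).2 χ.integrable
  have hwcont : Continuous w := χ.continuous.comp (continuous_id.div_const _)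
  have hw2 : Integrable (fun v : ℝ => v ^ 2 * ‖w v‖) := by
    have h0 : Integrable (fun u : ℝ => ‖u‖ ^ 2 * ‖χ u‖) := χ.integrable_pow_mul volume 2
    have h1 : Integrable (fun v : ℝ => ‖v / (2*Real.pi)‖ ^ 2 * ‖χ (v / (2*Real.pi))‖) :=
      (integrable_comp_div_iff _ h2pi).2 h0
    have h2 := h1.const_mul ((2*Real.pi)^2)
    apply h2.congr
    filter_upwards with v
    have h3 : |v / (2*Real.pi)| ^ 2 = v^2 / (2*Real.pi)^2 := by
      rw [_root_.sq_abs, div_pow]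
    simp only [Real.norm_eq_abs, h3, hwdef]
    field_simp
  have hψpos : ∀ x : ℝ, 0 < x → ψ x = 0 := by
    intro x hx
    have := hψ x
    rw [if_neg (not_le.2 hx)] at this
    exact this.symm
  have hψ0 : ψ 0 = 0 := by
    have h1 : Filter.Tendsto ψ (nhdsWithin 0 (Ioi 0)) (nhds (ψ 0)) :=
      (ψ.continuous.continuousAt).continuousWithinAt
    have h2 : Filter.Tendsto ψ (nhdsWithin 0 (Ioi 0)) (nhds 0) := by
      apply Filter.Tendsto.congr' _ tendsto_const_nhds
      filter_upwards [self_mem_nhdsWithin] with x hx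
      exact (hψpos x hx).symm
    exact tendsto_nhds_unique h1 h2
  have hw0 : ∫ v : ℝ, w v = 0 := by
    rw [hwdef]
    simp only
    rw [MeasureTheory.Measure.integral_comp_div (fun v => χ v) (2*Real.pi)]
    have hFT : FourierTransform.fourier (⇑χ : ℝ → ℂ) = ⇑ψ := by
      have h4 := (FourierTransform.fourierCLE ℝ (SchwartzMap ℝ ℂ)).apply_symm_apply ψ
      calc FourierTransform.fourier (⇑χ : ℝ → ℂ) = ⇑(FourierTransform.fourierCLE ℝ (SchwartzMap ℝ ℂ) χ) := by
            rw [FourierTransform.fourierCLE_apply]; rfl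
      _ = ⇑ψ := by rw [hχdef, h4]
    have h0 : FourierTransform.fourier (⇑χ : ℝ → ℂ) 0 = ∫ v : ℝ, χ v := by
      rw [Real.fourier_eq]
      simp
    have h5 : ∫ v : ℝ, χ v = 0 := by rw [← h0, hFT, hψ0]
    rw [h5, smul_zero]
  set W1 := ∫ v : ℝ, ‖w v‖ with hW1def
  set W3 := ∫ v : ℝ, v ^ 2 * ‖w v‖ with hW3def
  have hW1nn : 0 ≤ W1 := integral_nonneg fun v => norm_nonneg _
  have hW3nn : 0 ≤ W3 := integral_nonneg fun v => by positivity
  set D := W1 + W3 with hDdef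
  have hDnn : 0 ≤ D := by positivity
  have hπ : (0:ℝ) < Real.pi := Real.pi_pos
  have hΨ : ∀ b : ℝ, ‖∫ v in Iic b, w v‖ ≤ D / (1 + b ^ 2) := fun b =>
    hws_psi_tail_bound w hwint hw2 hw0 b
  refine ⟨2*W1 + 2*(D*Real.pi) + 1, by positivity, ?_⟩
  intro k hk t ht
  have ht0 : (0:ℝ) < t := lt_of_lt_of_le one_pos ht
  set c : ℝ := (2:ℝ)^k with hcdef
  have hc : 0 < c := by rw [hcdef]; positivity
  set G : ℝ → ℂ := fun u => (c:ℂ) * w (c * u) with hGdef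
  have hGint : Integrable G := by
    have h1 : Integrable (fun u : ℝ => w (c * u)) :=
      (integrable_comp_mul_left_iff w (ne_of_gt hc)).2 hwint
    exact h1.const_mul ((c:ℝ):ℂ)
  have hGcont : Continuous G :=
    continuous_const.mul (hwcont.comp (continuous_const.mul continuous_id))
  have keyA : ∀ y : ℝ,
      (∫ η in Iic (0:ℝ), Complex.exp (Complex.I * y * η) *
        ((Complex.exp (-(2 * Complex.I * t * η)) - 1) / (Complex.I * η)) * ϖ (η / c))
      = -∫ s in Ioc (-(2*t)) 0, G (y + s) := by
    intro y
    have step1 : (∫ η in Iic (0:ℝ), Complex.exp (Complex.I * y * η) *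
          ((Complex.exp (-(2 * Complex.I * t * η)) - 1) / (Complex.I * η)) * ϖ (η / c))
        = ∫ η in Iic (0:ℝ), Complex.exp (Complex.I * y * η) *
          ((Complex.exp (-(2 * Complex.I * t * η)) - 1) / (Complex.I * η)) * ψ (η / c) := by
      apply setIntegral_congr_fun measurableSet_Iic
      intro η hη
      simp only [mem_Iic] at hη
      have h1 : η / c ≤ 0 := div_nonpos_of_nonpos_of_nonneg hη hc.le
      have h2 := hψ (η / c)
      rw [if_pos h1] at h2
      simp only
      rw [h2]
    have step2 : (∫ η in Iic (0:ℝ), Complex.exp (Complex.I * y * η) *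
          ((Complex.exp (-(2 * Complex.I * t * η)) - 1) / (Complex.I * η)) * ψ (η / c))
        = ∫ η : ℝ, Complex.exp (Complex.I * y * η) *
          ((Complex.exp (-(2 * Complex.I * t * η)) - 1) / (Complex.I * η)) * ψ (η / c) := by
      apply setIntegral_eq_integral_of_forall_compl_eq_zero
      intro η hη
      simp only [mem_Iic, not_le] at hη
      rw [hψpos _ (div_pos hη hc), mul_zero]
    have step3 : (∫ η : ℝ, Complex.exp (Complex.I * y * η) *
          ((Complex.exp (-(2 * Complex.I * t * η)) - 1) / (Complex.I * η)) * ψ (η / c))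
        = ∫ η : ℝ, Complex.exp (Complex.I * y * η) *
            (-(∫ s in Ioc (-(2*t)) 0, Complex.exp (Complex.I * η * s))) * ψ (η / c) := by
      apply integral_congr_ae
      filter_upwards [compl_mem_ae_iff.2
        (show volume ({(0:ℝ)} : Set ℝ) = 0 from Real.volume_singleton)] with η hη
      have hη0 : η ≠ 0 := hη
      congr 2
      rw [← intervalIntegral.integral_of_le (by linarith : -(2*t) ≤ (0:ℝ)),
        hws_K_eval t η hη0, ← neg_div, neg_sub]
    rw [step1, step2, step3]
    simp only [mul_neg, neg_mul]
    rw [MeasureTheory.integral_neg]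
    rw [hws_fubini_step ψ c t y hc]
    congr 1
    apply setIntegral_congr_fun measurableSet_Ioc
    intro s _
    have h6 := hws_G_scale ψ w hwformula c hc (y+s)
    push_cast at h6
    exact h6
  have keyB : ∀ y : ℝ, (∫ s in Ioc (-(2*t)) 0, G (y + s))
      = (∫ v in Iic (c*y), w v) - (∫ v in Iic (c*(y - 2*t)), w v) := by
    intro y
    rw [← intervalIntegral.integral_of_le (by linarith : -(2*t) ≤ (0:ℝ))]
    rw [show (fun s : ℝ => G (y + s)) = fun s : ℝ => (fun u : ℝ => (c:ℂ) * w (c * u)) (y + s)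
      from rfl]
    rw [intervalIntegral.integral_comp_add_left (fun u : ℝ => (c:ℂ) * w (c * u)) y]
    rw [show y + -(2*t) = y - 2*t by ring, add_zero]
    rw [← intervalIntegral.integral_Iic_sub_Iic hGint.integrableOn hGint.integrableOn]
    rw [hws_Iic_scale w c hc y, hws_Iic_scale w c hc (y - 2*t)]
  have habs : ∀ y : ℝ,
      norm (∫ η in Iic (0:ℝ), Complex.exp (Complex.I * y * η) *
        ((Complex.exp (-(2 * Complex.I * t * η)) - 1) / (Complex.I * η)) * ϖ (η / c))
      = ‖∫ s in Ioc (-(2*t)) 0, G (y + s)‖ := by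
    intro y
    rw [keyA y, norm_neg]
  have hGnorm : (∫ u : ℝ, ‖G u‖) = W1 := by
    have h1 : (fun u : ℝ => ‖G u‖) = fun u : ℝ => c * ‖w (c * u)‖ := by
      funext u
      rw [hGdef]
      simp only
      rw [norm_mul, Complex.norm_real, Real.norm_eq_abs, abs_of_pos hc]
    rw [h1, MeasureTheory.integral_const_mul,
      MeasureTheory.Measure.integral_comp_mul_left (fun v => ‖w v‖) c,
      abs_of_pos (inv_pos.2 hc), smul_eq_mul, ← mul_assoc,
      mul_inv_cancel₀ (ne_of_gt hc), one_mul]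
  have lhs_eq : (∫ y : ℝ, norm (∫ η in Iic (0:ℝ), Complex.exp (Complex.I * y * η) *
        ((Complex.exp (-(2 * Complex.I * t * η)) - 1) / (Complex.I * η)) * ϖ (η / c)))
      = ∫ y : ℝ, ‖∫ s in Ioc (-(2*t)) 0, G (y + s)‖ := by
    congr 1
    funext y
    exact habs y
  have hA : (∫ y : ℝ, ‖∫ s in Ioc (-(2*t)) 0, G (y + s)‖) ≤ 2*t*W1 := by
    have := hws_boundA G hGint hGcont (2*t) (by linarith)
    rw [hGnorm] at this
    exact this
  have hB : (∫ y : ℝ, ‖∫ s in Ioc (-(2*t)) 0, G (y + s)‖) ≤ 2*(D*Real.pi) * c⁻¹ := by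
    have i1 : Integrable (fun y : ℝ => D / (1 + (c*y)^2)) := by
      simp only [div_eq_mul_inv]
      exact (((integrable_comp_mul_left_iff (fun x : ℝ => (1+x^2)⁻¹)
        (ne_of_gt hc)).2 integrable_inv_one_add_sq).const_mul D)
    have i2 : Integrable (fun y : ℝ => D / (1 + (c*(y - 2*t))^2)) :=
      i1.comp_sub_right (2*t)
    have hval1 : (∫ y : ℝ, D / (1 + (c*y)^2)) = D * (c⁻¹ * Real.pi) := by
      simp only [div_eq_mul_inv]
      rw [MeasureTheory.integral_const_mul,
        MeasureTheory.Measure.integral_comp_mul_left (fun x : ℝ => (1+x^2)⁻¹) c,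
        integral_univ_inv_one_add_sq, abs_of_pos (inv_pos.2 hc), smul_eq_mul]
    have hval2 : (∫ y : ℝ, D / (1 + (c*(y - 2*t))^2)) = D * (c⁻¹ * Real.pi) := by
      rw [show (fun y : ℝ => D / (1 + (c*(y - 2*t))^2))
        = fun y : ℝ => (fun z : ℝ => D / (1 + (c*z)^2)) (y - 2*t) from rfl]
      rw [integral_sub_right_eq_self (fun z : ℝ => D / (1 + (c*z)^2)) (2*t)]
      exact hval1
    have hmaj : ∀ y : ℝ, ‖∫ s in Ioc (-(2*t)) 0, G (y + s)‖
        ≤ D / (1 + (c*y)^2) + D / (1 + (c*(y - 2*t))^2) := by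
      intro y
      rw [keyB y]
      refine (norm_sub_le _ _).trans (add_le_add ?_ ?_)
      · exact hΨ (c*y)
      · exact hΨ (c*(y - 2*t))
    calc (∫ y : ℝ, ‖∫ s in Ioc (-(2*t)) 0, G (y + s)‖)
        ≤ ∫ y : ℝ, (D / (1 + (c*y)^2) + D / (1 + (c*(y - 2*t))^2)) := by
          apply integral_mono_of_nonneg
          · filter_upwards with y; exact norm_nonneg _
          · exact i1.add i2
          · filter_upwards with y; exact hmaj y
    _ = 2*(D*Real.pi) * c⁻¹ := by
        rw [MeasureTheory.integral_add i1 i2, hval1, hval2]; ring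
  rw [lhs_eq]
  set r : ℝ := (2:ℝ) ^ (-(k:ℝ)/2) with hrdef
  have hr0 : 0 < r := by rw [hrdef]; positivity
  have hcr : r * r = c⁻¹ := by
    rw [hrdef, ← Real.rpow_add (by norm_num : (0:ℝ) < 2)]
    rw [show -(k:ℝ)/2 + -(k:ℝ)/2 = ((-k : ℤ) : ℝ) by push_cast; ring]
    rw [Real.rpow_intCast, zpow_neg, hcdef]
  set st : ℝ := t ^ ((1:ℝ)/2) with hstdef
  have hst0 : 0 < st := by rw [hstdef]; positivity
  have hstst : st * st = t := by
    rw [hstdef, ← Real.rpow_add ht0]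
    norm_num
  have hrst : (0:ℝ) ≤ r * st := by positivity
  have hcinv : c⁻¹ = (2:ℝ) ^ (-(k:ℝ)) := by
    rw [hcdef, ← Real.rpow_intCast 2 k, ← Real.rpow_neg (by norm_num : (0:ℝ) ≤ 2)]
  have hr2 : r = c⁻¹ ^ ((1:ℝ)/2) := by
    rw [hcinv, ← Real.rpow_mul (by norm_num : (0:ℝ) ≤ 2), hrdef]
    congr 1
    ring
  have h2W1 : (0:ℝ) ≤ 2*W1 := by linarith
  have h2Dpi : (0:ℝ) ≤ 2*(D*Real.pi) := by
    have := mul_nonneg hDnn hπ.le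
    linarith
  rcases le_total (t * c) 1 with hcase | hcase
  · have h1 : t ≤ c⁻¹ := by
      rw [← one_div, le_div_iff₀ hc]
      exact hcase
    have hstr : st ≤ r := by
      rw [hr2, hstdef]
      exact Real.rpow_le_rpow ht0.le h1 (by norm_num)
    calc (∫ y : ℝ, ‖∫ s in Ioc (-(2*t)) 0, G (y + s)‖) ≤ 2*t*W1 := hA
    _ = (2*W1)*(st*st) := by rw [hstst]; ring
    _ ≤ (2*W1)*(r*st) := mul_le_mul_of_nonneg_left
        (mul_le_mul_of_nonneg_right hstr hst0.le) h2W1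
    _ ≤ (2*W1 + 2*(D*Real.pi) + 1) * (r*st) :=
        mul_le_mul_of_nonneg_right (by linarith) hrst
    _ = (2*W1 + 2*(D*Real.pi) + 1) * r * st := by ring
  · have h1 : c⁻¹ ≤ t := by
      rw [← one_div, div_le_iff₀ hc]
      linarith
    have hstr : r ≤ st := by
      rw [hr2, hstdef]
      exact Real.rpow_le_rpow (inv_pos.2 hc).le h1 (by norm_num)
    calc (∫ y : ℝ, ‖∫ s in Ioc (-(2*t)) 0, G (y + s)‖) ≤ 2*(D*Real.pi) * c⁻¹ := hB
    _ = (2*(D*Real.pi))*(r*r) := by rw [← hcr]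
    _ ≤ (2*(D*Real.pi))*(r*st) := mul_le_mul_of_nonneg_left
        (mul_le_mul_of_nonneg_left hstr hr0.le) h2Dpi
    _ ≤ (2*W1 + 2*(D*Real.pi) + 1) * (r*st) :=
        mul_le_mul_of_nonneg_right (by linarith) hrst
    _ = (2*W1 + 2*(D*Real.pi) + 1) * r * st := by ring
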